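/- arXiv:1811.04243 — 4 statements merged into one kernel-verified Lean document; each statement's English description precedes it below -/
import Mathlib

section
/- Let F be a field, n ≥ 1, and A ⊆ M_n(F) an irreducible F-subalgebra containing the identity. If r is the minimal nonzero rank of elements of A, then r divides n and A is isomorphic as an F-algebra to M_{n/r}(Δ) for some division F-algebra Δ of dimension r over F. -/
/-!
By Schur's lemma the commutant `Δ' = End_A(V)` of the simple `A`-module `V = Fⁿ` is a division
algebra, say of dimension `d` over `F`, and `V` is a `Δ'`-vector space of some dimension `m`
with `d * m = n`. The Jacobson density theorem identifies `A` with `End_Δ'(V) ≅ M_m(Δ'ᵐᵒᵖ)`.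
Every `a ∈ A` is `Δ'`-linear, so its range is a `Δ'`-subspace and has `F`-dimension a multiple
of `d`; a `Δ'`-linear map of `Δ'`-rank one lies in `A` and has rank exactly `d`. Hence `r = d`.
-/

open Module

theorem finrank_range_restrictScalars {F D V : Type*} [Field F] [DivisionRing D] [Algebra F D]
    [AddCommGroup V] [Module F V] [Module D V] [IsScalarTower F D V] (f : V →ₗ[D] V) :
    finrank F (LinearMap.range (f.restrictScalars F)) =
      finrank F D * finrank D (LinearMap.range f) := by
  rw [LinearMap.range_restrictScalars]
  exact (finrank_mul_finrank F D (LinearMap.range f)).symm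

theorem exists_finrank_range_eq_one {D V : Type*} [DivisionRing D] [AddCommGroup V] [Module D V]
    [Nontrivial V] : ∃ f : V →ₗ[D] V, finrank D (LinearMap.range f) = 1 := by
  let b := Basis.ofVectorSpace D V
  obtain ⟨i⟩ := b.index_nonempty
  refine ⟨LinearMap.toSpanSingleton D V (b i) ∘ₗ b.coord i, ?_⟩
  rw [LinearMap.range_comp_of_range_eq_top, LinearMap.range_toSpanSingleton,
    finrank_span_singleton (b.ne_zero i)]
  exact LinearMap.range_eq_top.mpr fun c => ⟨c • b i, by simp⟩

theorem lsmul_injective_of_faithfulSMul (R : Type*) {A B M : Type*} [CommSemiring R] [Semiring A]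
    [Semiring B] [Algebra R A] [Algebra R B] [AddCommMonoid M] [Module R M] [Module A M]
    [Module B M] [IsScalarTower R A M] [IsScalarTower R B M] [SMulCommClass A B M]
    [FaithfulSMul A M] :
    Function.Injective (Algebra.lsmul R B M : A → Module.End B M) :=
  fun _ _ h => FaithfulSMul.eq_of_smul_eq_smul (LinearMap.congr_fun h)

noncomputable def Module.Basis.endAlgEquivMatrixMulOpposite {F D V ι : Type*} [CommSemiring F]
    [Ring D] [Algebra F D] [AddCommGroup V] [Module F V] [Module D V] [IsScalarTower F D V]
    [Fintype ι] [DecidableEq ι] (b : Basis ι D V) :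
    Module.End D V ≃ₐ[F] Matrix ι ι Dᵐᵒᵖ :=
  (b.equivFun.conjAlgEquiv F).trans <|
    (endVecAlgEquivMatrixEnd ι F D D).trans (AlgEquiv.moduleEndSelf F).symm.mapMatrix

theorem isSimpleModule_of_forall_invariant {F R V : Type*} [Semiring F] [Ring R] [SMul F R]
    [AddCommGroup V] [Module F V] [Module R V] [IsScalarTower F R V] [Nontrivial V]
    (h : ∀ W : Submodule F V, (∀ a : R, ∀ v ∈ W, a • v ∈ W) → W = ⊥ ∨ W = ⊤) :
    IsSimpleModule R V where
  eq_bot_or_eq_top W := by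
    simpa only [Submodule.restrictScalars_eq_bot_iff, Submodule.restrictScalars_eq_top_iff]
      using h (W.restrictScalars F) fun a _ hv => W.smul_mem a hv

section Commutant

variable (F : Type*) {R V : Type*} [Field F] [Ring R] [Algebra F R] [AddCommGroup V]
  [Module F V] [Module R V] [IsScalarTower F R V] [IsSimpleModule R V]

theorem finrank_end_mul_finrank :
    finrank F (Module.End R V) * finrank (Module.End R V) V = finrank F V := by
  classical
  exact finrank_mul_finrank F (Module.End R V) V

variable [FiniteDimensional F V]

theorem exists_finrank_range_lsmul_eq_finrank_end :
    ∃ a : R, finrank F (LinearMap.range (Algebra.lsmul F F V a)) = finrank F (Module.End R V) := by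
  classical
  have : Module.Finite (Module.End R V) V := .of_restrictScalars_finite F _ _
  have := IsSimpleModule.nontrivial R V
  obtain ⟨f, hf⟩ := exists_finrank_range_eq_one (D := Module.End R V) (V := V)
  obtain ⟨a, rfl⟩ := Module.Finite.toModuleEnd_moduleEnd_surjective f
  refine ⟨a, ?_⟩
  change finrank F
    (LinearMap.range ((Module.toModuleEnd (Module.End R V) V a).restrictScalars F)) = _
  rw [finrank_range_restrictScalars, hf, mul_one]

variable [FaithfulSMul R V]

theorem finrank_end_le_finrank_range_lsmul {a : R} (ha : a ≠ 0) :
    finrank F (Module.End R V) ≤ finrank F (LinearMap.range (Algebra.lsmul F F V a)) := by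
  classical
  have : Module.Finite (Module.End R V) V := .of_restrictScalars_finite F _ _
  let f := Algebra.lsmul F (Module.End R V) V a
  have hf : f ≠ 0 := (map_ne_zero_iff _ (lsmul_injective_of_faithfulSMul F)).mpr ha
  change _ ≤ finrank F (LinearMap.range (f.restrictScalars F))
  rw [finrank_range_restrictScalars]
  exact Nat.le_mul_of_pos_right _
    (Submodule.one_le_finrank_iff.mpr (LinearMap.range_eq_bot.not.mpr hf))

theorem isLeast_finrank_range_lsmul :
    IsLeast {k | 0 < k ∧ ∃ a : R, finrank F (LinearMap.range (Algebra.lsmul F F V a)) = k}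
      (finrank F (Module.End R V)) := by
  classical
  refine ⟨⟨finrank_pos, exists_finrank_range_lsmul_eq_finrank_end F⟩, ?_⟩
  rintro k ⟨hk, a, rfl⟩
  refine finrank_end_le_finrank_range_lsmul F fun ha => ?_
  rw [ha, map_zero, LinearMap.range_zero, finrank_bot] at hk
  exact hk.false

open scoped Classical in
theorem lsmul_end_bijective :
    Function.Bijective (Algebra.lsmul F (Module.End R V) V : R → Module.End (Module.End R V) V) := by
  have : Module.Finite (Module.End R V) V := .of_restrictScalars_finite F _ _
  exact ⟨lsmul_injective_of_faithfulSMul F, Module.Finite.toModuleEnd_moduleEnd_surjective⟩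

open scoped Classical in
noncomputable def algEquivMatrixEndMulOpposite :
    R ≃ₐ[F] Matrix (Fin (finrank (Module.End R V) V)) (Fin (finrank (Module.End R V) V))
      (Module.End R V)ᵐᵒᵖ :=
  have : Module.Finite (Module.End R V) V := .of_restrictScalars_finite F _ _
  (AlgEquiv.ofBijective _ (lsmul_end_bijective F)).trans
    (finBasis (Module.End R V) V).endAlgEquivMatrixMulOpposite

end Commutant

section MatrixSubalgebra

variable {F : Type*} [Field F] {n : ℕ} (A : Subalgebra F (Matrix (Fin n) (Fin n) F))

instance : FaithfulSMul A (Fin n → F) :=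
  ⟨fun h => Subtype.ext (Matrix.ext_iff_mulVec.mpr h)⟩

theorem rank_eq_finrank_range_lsmul (a : A) :
    (a : Matrix (Fin n) (Fin n) F).rank =
      finrank F (LinearMap.range (Algebra.lsmul F F (Fin n → F) a)) :=
  rfl

end MatrixSubalgebra

theorem irreducible_subalgebra_structure_general
    {F : Type} [Field F] {n : ℕ}
    (A : Subalgebra F (Matrix (Fin n) (Fin n) F))
    (hirr : ∀ W : Submodule F (Fin n → F),
      (∀ M ∈ A, ∀ v ∈ W, M.mulVec v ∈ W) → W = ⊥ ∨ W = ⊤)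
    (r : ℕ)
    (hr : IsLeast {k : ℕ | 0 < k ∧ ∃ M ∈ A, M.rank = k} r) :
    r ∣ n ∧
      ∃ (Δ : Type) (_ : DivisionRing Δ) (_ : Algebra F Δ),
        Module.finrank F Δ = r ∧
        Nonempty (A ≃ₐ[F] Matrix (Fin (n / r)) (Fin (n / r)) Δ) := by
  classical
  obtain ⟨hr0, M, -, hM⟩ := hr.1
  have : Nonempty (Fin n) := Fin.pos_iff_nonempty.mp (hM ▸ hr0 |>.trans_le M.rank_le_width)
  have : IsSimpleModule A (Fin n → F) :=
    isSimpleModule_of_forall_invariant fun W hW => hirr W fun M hM v hv => hW ⟨M, hM⟩ v hv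
  have hrd : r = finrank F (Module.End A (Fin n → F)) := hr.unique <| by
    simpa only [← rank_eq_finrank_range_lsmul, Subtype.exists, exists_prop]
      using isLeast_finrank_range_lsmul F (R := A) (V := Fin n → F)
  have hdm : r * finrank (Module.End A (Fin n → F)) (Fin n → F) = n := by
    rw [hrd, finrank_end_mul_finrank, finrank_fin_fun]
  have hm : n / r = finrank (Module.End A (Fin n → F)) (Fin n → F) :=
    Nat.div_eq_of_eq_mul_right hr0 hdm.symm
  refine ⟨Dvd.intro _ hdm, (Module.End A (Fin n → F))ᵐᵒᵖ, inferInstance, inferInstance, ?_, ⟨?_⟩⟩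
  · rw [hrd, (MulOpposite.opLinearEquiv F).finrank_eq.symm]
  · exact (algEquivMatrixEndMulOpposite F).trans (Matrix.reindexAlgEquiv F _ (finCongr hm.symm))

/-- An irreducible unital subalgebra of `M_n(F)` with minimal nonzero rank `r`
satisfies `r ∣ n` and is isomorphic to `M_{n/r}(Δ)` for a division `F`-algebra
`Δ` of dimension `r`. -/
theorem irreducible_subalgebra_structure
    {F : Type} [Field F] {n : ℕ} (hn : 1 ≤ n)
    (A : Subalgebra F (Matrix (Fin n) (Fin n) F))
    (hirr : ∀ W : Submodule F (Fin n → F),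
      (∀ M ∈ A, ∀ v ∈ W, M.mulVec v ∈ W) → W = ⊥ ∨ W = ⊤)
    (r : ℕ)
    (hr : IsLeast {k : ℕ | 0 < k ∧ ∃ M ∈ A, M.rank = k} r) :
    r ∣ n ∧
      ∃ (Δ : Type) (_ : DivisionRing Δ) (_ : Algebra F Δ),
        Module.finrank F Δ = r ∧
        Nonempty (A ≃ₐ[F] Matrix (Fin (n / r)) (Fin (n / r)) Δ) :=
  irreducible_subalgebra_structure_general A hirr r hr
end

section
/- Let F ≤ K be fields and S ⊆ M_n(K) an absolutely irreducible multiplicative semigroup with tr(s) ∈ F for all s ∈ S and tr(S) ≠ {0}. Then dim_F Alg_F(S) = dim_K Alg_K(S) = n². -/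
/-!
Since `S` is closed under multiplication, `Alg_K(S) = K·1 + span_K S` and `span_K S` is a
two-sided ideal of the simple ring `M_n(K)`; it is nonzero, so `S` spans `M_n(K)` over `K` and
contains a `K`-basis `b`. The trace form `(A, B) ↦ tr (A B)` is nondegenerate and takes values
in `F` on `b × b`, so the `F`-lattice `span_F b` lies in its own trace dual. The dual is spanned
over `F` by the dual basis of `b`, so both have `F`-dimension `n²` and they coincide. Everything
in `1 ∪ S` has `F`-valued trace pairing with `b ⊆ S`, hence lies in that dual, so
`Alg_F(S) = span_F (1 ∪ S) = span_F b`.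
-/

open Module Submodule
open LinearMap (BilinForm)

section MulClosed

variable {R A : Type*}

theorem Submonoid.coe_closure_eq_insert_one [Monoid A] {S : Set A}
    (hS : ∀ a ∈ S, ∀ b ∈ S, a * b ∈ S) : (Submonoid.closure S : Set A) = insert 1 S := by
  let T : Subsemigroup A := ⟨S, fun {a b} ha hb => hS a ha b hb⟩
  have hT : (Subsemigroup.closure S : Set A) = S := congrArg SetLike.coe T.closure_eq
  rw [Submonoid.closure_eq_one_union, hT, Set.singleton_union]

theorem Algebra.adjoin_toSubmodule_eq_span_insert_one [CommSemiring R] [Semiring A]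
    [Algebra R A] {S : Set A} (hS : ∀ a ∈ S, ∀ b ∈ S, a * b ∈ S) :
    Subalgebra.toSubmodule (Algebra.adjoin R S) = span R (insert 1 S) := by
  rw [Algebra.adjoin_eq_span, Submonoid.coe_closure_eq_insert_one hS]

theorem Submodule.mul_mem_span_of_mul_mem [CommSemiring R] [Semiring A] [Algebra R A]
    {S : Set A} (hS : ∀ a ∈ S, ∀ b ∈ S, a * b ∈ S) {x y : A}
    (hx : x ∈ span R S) (hy : y ∈ span R S) : x * y ∈ span R S := by
  have hle : span R S * span R S ≤ span R S := by
    rw [span_mul_span]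
    exact span_le.2 (Set.mul_subset_iff.2 fun a ha b hb => subset_span (hS a ha b hb))
  exact hle (mul_mem_mul hx hy)

theorem Submodule.span_eq_top_of_adjoin_eq_top [CommRing R] [Ring A] [Algebra R A]
    [IsSimpleRing A] {S : Set A} (hS : ∀ a ∈ S, ∀ b ∈ S, a * b ∈ S)
    (hadj : Algebra.adjoin R S = ⊤) (hne : ∃ a ∈ S, a ≠ 0) : span R S = ⊤ := by
  have hdecomp : ∀ x : A, ∃ c : R, ∃ z ∈ span R S, x = c • 1 + z := fun x => by
    have hx : x ∈ span R (insert 1 S) := by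
      rw [← Algebra.adjoin_toSubmodule_eq_span_insert_one hS, hadj]; trivial
    exact mem_span_insert.1 hx
  let I : TwoSidedIdeal A := .mk' (span R S) (zero_mem _) add_mem neg_mem
    (fun {x w} hw => by
      obtain ⟨c, z, hz, rfl⟩ := hdecomp x
      rw [add_mul, smul_mul_assoc, one_mul]
      exact add_mem (smul_mem _ c hw) (mul_mem_span_of_mul_mem hS hz hw))
    (fun {w x} hw => by
      obtain ⟨c, z, hz, rfl⟩ := hdecomp x
      rw [mul_add, mul_smul_comm, mul_one]
      exact add_mem (smul_mem _ c hw) (mul_mem_span_of_mul_mem hS hw hz))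
  obtain ⟨a, haS, ha0⟩ := hne
  have hI : I = ⊤ := (IsSimpleRing.simple.eq_bot_or_eq_top I).resolve_left fun hbot => by
    have haI : a ∈ I := (TwoSidedIdeal.mem_mk' ..).2 (subset_span haS)
    exact ha0 ((TwoSidedIdeal.mem_bot A).1 (hbot ▸ haI))
  refine eq_top_iff.2 fun x _ => ?_
  have hxI : x ∈ I := hI ▸ TwoSidedIdeal.mem_top A
  exact (TwoSidedIdeal.mem_mk' ..).1 hxI

end MulClosed

section SubfieldLattice

variable {F K M ι : Type*} [Field F] [Field K] [AddCommGroup M] [Algebra F K]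
  [Module F M] [Module K M] [IsScalarTower F K M]

theorem Module.Basis.finrank_span_range_eq_finrank [Finite ι] (b : Basis ι K M) :
    finrank F (span F (Set.range b)) = finrank K M := by
  cases nonempty_fintype ι
  rw [finrank_span_eq_card (b.linearIndependent.restrict_scalars' F), finrank_eq_card_basis b]

namespace LinearMap.BilinForm

theorem mem_dualSubmodule_span_iff (B : BilinForm K M) {s : Set M} {x : M} :
    x ∈ B.dualSubmodule (span F s) ↔ ∀ y ∈ s, B x y ∈ (1 : Submodule F K) := by
  refine ⟨fun hx y hy => hx y (subset_span hy), fun hx => ?_⟩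
  have hle : span F s ≤ (1 : Submodule F K).comap ((B x).restrictScalars F) := span_le.2 hx
  exact fun y hy => hle hy

theorem dualSubmodule_span_eq_span_of_apply_mem [Finite ι] {B : BilinForm K M}
    (hB : B.Nondegenerate) (b : Basis ι K M)
    (hb : ∀ i j, B (b i) (b j) ∈ (1 : Submodule F K)) :
    B.dualSubmodule (span F (Set.range b)) = span F (Set.range b) := by
  classical
  have hle : span F (Set.range b) ≤ B.dualSubmodule (span F (Set.range b)) := by
    refine span_le.2 ?_
    rintro _ ⟨i, rfl⟩
    exact (mem_dualSubmodule_span_iff B).2 (by rintro _ ⟨j, rfl⟩; exact hb i j)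
  rw [dualSubmodule_span_of_basis B hB b] at hle ⊢
  have := FiniteDimensional.span_of_finite F (Set.finite_range (B.dualBasis hB b))
  refine (eq_of_le_of_finrank_eq hle ?_).symm
  rw [b.finrank_span_range_eq_finrank, (B.dualBasis hB b).finrank_span_range_eq_finrank]

end LinearMap.BilinForm

end SubfieldLattice

namespace Matrix

variable (n K : Type*) [Fintype n] [CommSemiring K]

def traceForm : BilinForm K (Matrix n n K) :=
  (LinearMap.mul K (Matrix n n K)).compr₂ (traceLinearMap n K K)

variable {n K}

@[simp]
theorem traceForm_apply (A B : Matrix n n K) : traceForm n K A B = (A * B).trace := rfl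

theorem traceForm_nondegenerate [DecidableEq n] : (traceForm n K).Nondegenerate :=
  ⟨fun A hA => ext_iff_trace_mul_right.2 fun X => by simpa using hA X,
    fun A hA => ext_iff_trace_mul_left.2 fun X => by simpa using hA X⟩

end Matrix

/-- If `S` is an absolutely irreducible semigroup in `M_n(K)` with traces in a
subfield `F` and not all traces zero, then the `F`-algebra generated by `S` has
`F`-dimension `n²`, equal to the `K`-dimension of the `K`-algebra it generates. -/
theorem finrank_adjoin_of_traces_in_subfield
    {F K : Type} [Field F] [Field K] [Algebra F K] {n : ℕ} (hn : 1 ≤ n)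
    (S : Set (Matrix (Fin n) (Fin n) K))
    (hsemi : ∀ A ∈ S, ∀ B ∈ S, A * B ∈ S)
    (habs : Algebra.adjoin K S = ⊤)
    (htr : ∀ A ∈ S, Matrix.trace A ∈ (algebraMap F K).range)
    (htr0 : ∃ A ∈ S, Matrix.trace A ≠ 0) :
    Module.finrank F (Algebra.adjoin F S) = n ^ 2 ∧
    Module.finrank K (Algebra.adjoin K S) = n ^ 2 := by
  have : NeZero n := ⟨by omega⟩
  obtain ⟨A, hAS, hA⟩ := htr0
  have hspan : span K S = ⊤ := span_eq_top_of_adjoin_eq_top hsemi habs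
    ⟨A, hAS, fun h => hA (h ▸ Matrix.trace_zero ..)⟩
  let b := Basis.ofSpan hspan.ge
  have hbS : ∀ j, b j ∈ S := fun j => Basis.ofSpan_subset hspan.ge ⟨j, rfl⟩
  have hlattice := LinearMap.BilinForm.dualSubmodule_span_eq_span_of_apply_mem (F := F)
    (B := Matrix.traceForm (Fin n) K) Matrix.traceForm_nondegenerate b
    fun i j => mem_one.2 (htr _ (hsemi _ (hbS i) _ (hbS j)))
  have hsub : insert 1 S ⊆ span F (Set.range b) := by
    intro x hx
    rw [SetLike.mem_coe, ← hlattice, LinearMap.BilinForm.mem_dualSubmodule_span_iff]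
    rintro _ ⟨j, rfl⟩
    refine mem_one.2 (htr _ ?_)
    rcases hx with rfl | hx
    · simpa using hbS j
    · exact hsemi _ hx _ (hbS j)
  have hspanF : span F (insert 1 S) = span F (Set.range b) :=
    le_antisymm (span_le.2 hsub)
      (span_le.2 (Set.range_subset_iff.2 fun j => subset_span (Or.inr (hbS j))))
  constructor
  · change finrank F (Subalgebra.toSubmodule (Algebra.adjoin F S)) = n ^ 2
    rw [Algebra.adjoin_toSubmodule_eq_span_insert_one hsemi, hspanF,
      b.finrank_span_range_eq_finrank, finrank_matrix]
    simp [sq]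
  · rw [habs, subalgebra_top_finrank_eq_submodule_top_finrank, finrank_top, finrank_matrix]
    simp [sq]
end

section
/- Let ℍ denote the real quaternions and n ≥ 2. Then M_n(ℍ), as a real vector space, is spanned by the identity matrix together with the set of nilpotent matrices in M_n(ℍ). -/
/-!
Off-diagonal matrix units `single i j a` square to zero. On two coordinates `i ≠ j` the
rank-one matrix `(a, -b a)ᵀ (b, 1)` squares to zero as well, which puts
`single i i (a b) - single j j (b a)` in the span of the nilpotents; comparing the cases
`(a, b)` and `(a b, 1)` gives every diagonal commutator `single i i (a b - b a)`, and averaging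
the differences `single i i 1 - single j j 1` against the identity gives `single i i 1`.
In `ℍ` every element is a combination of `1` and commutators, since `j k - k j = 2 i` and
cyclically.
-/

namespace Matrix

variable {K A n : Type*} [CommRing K] [Ring A] [Algebra K A] [Fintype n] [DecidableEq n]

theorem single_mem_span_isNilpotent {i j : n} (h : i ≠ j) (a : A) :
    single i j a ∈ Submodule.span K {N : Matrix n n A | IsNilpotent N} :=
  Submodule.subset_span ⟨2, by rw [sq, single_mul_single_of_ne _ _ _ _ h.symm]⟩

theorem single_mul_sub_single_mul_mem_span_isNilpotent {i j : n} (h : i ≠ j) (a b : A) :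
    single i i (a * b) - single j j (b * a) ∈
      Submodule.span K {N : Matrix n n A | IsNilpotent N} := by
  -- `N = (a, -b a)ᵀ (b, 1)` on the coordinates `i, j`, and `(b, 1) ⬝ (a, -b a)ᵀ = 0`
  set N := single i i (a * b) + single i j a - single j i (b * a * b) - single j j (b * a)
  have hN : N ^ 2 = 0 := by
    simp only [N, sq, add_mul, mul_add, sub_mul, mul_sub, single_mul_single_same,
      single_mul_single_of_ne _ _ _ _ h, single_mul_single_of_ne _ _ _ _ h.symm, mul_assoc]
    abel
  have hsplit : single i i (a * b) - single j j (b * a) =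
      N - single i j a + single j i (b * a * b) := by
    simp only [N]; abel
  rw [hsplit]
  exact add_mem (sub_mem (Submodule.subset_span ⟨2, hN⟩) (single_mem_span_isNilpotent h a))
    (single_mem_span_isNilpotent h.symm _)

theorem single_commutator_mem_span_isNilpotent [Nontrivial n] (i : n) (a b : A) :
    single i i (a * b - b * a) ∈ Submodule.span K {N : Matrix n n A | IsNilpotent N} := by
  obtain ⟨j, hj⟩ := exists_ne i
  have hab := single_mul_sub_single_mul_mem_span_isNilpotent (K := K) hj (a * b) 1
  have hba := single_mul_sub_single_mul_mem_span_isNilpotent (K := K) hj a b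
  rw [mul_one, one_mul] at hab
  have hsplit : single i i (a * b - b * a) =
      (single j j (a * b) - single i i (b * a)) - (single j j (a * b) - single i i (a * b)) := by
    rw [sub_eq_add_neg, single_add, ← single_neg]
    abel
  exact hsplit ▸ sub_mem hba hab

theorem single_one_mem_span_one_union_isNilpotent (hn : IsUnit (Fintype.card n : K)) (i : n) :
    single i i (1 : A) ∈ Submodule.span K ({1} ∪ {N : Matrix n n A | IsNilpotent N}) := by
  set S := Submodule.span K ({1} ∪ {N : Matrix n n A | IsNilpotent N})
  have hsum : (Fintype.card n : K) • single i i (1 : A) =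
      ∑ j, (single i i (1 : A) - single j j 1) + 1 := by
    rw [Finset.sum_sub_distrib, sum_single_one, Finset.sum_const, Finset.card_univ,
      Nat.cast_smul_eq_nsmul, sub_add_cancel]
  rw [← S.smul_mem_iff_of_isUnit hn, hsum]
  refine add_mem (Submodule.sum_mem _ fun j _ ↦ ?_) (Submodule.subset_span (.inl rfl))
  rcases eq_or_ne i j with rfl | h
  · rw [sub_self]
    exact S.zero_mem
  · refine Submodule.span_mono Set.subset_union_right ?_
    simpa only [mul_one] using
      single_mul_sub_single_mul_mem_span_isNilpotent (K := K) h (1 : A) 1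

theorem span_one_union_isNilpotent_eq_top [Nontrivial n] (hn : IsUnit (Fintype.card n : K))
    (hA : Submodule.span K ({1} ∪ {c : A | ∃ a b, a * b - b * a = c}) = ⊤) :
    Submodule.span K ({1} ∪ {N : Matrix n n A | IsNilpotent N}) = ⊤ := by
  set S := Submodule.span K ({1} ∪ {N : Matrix n n A | IsNilpotent N})
  have hdiag (i : n) (a : A) : single i i a ∈ S := by
    have hle : Submodule.span K ({1} ∪ {c : A | ∃ a b, a * b - b * a = c}) ≤
        S.comap (singleLinearMap K i i) := by
      rw [Submodule.span_le]
      rintro _ (rfl | ⟨a, b, rfl⟩)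
      · exact single_one_mem_span_one_union_isNilpotent hn i
      · exact Submodule.span_mono Set.subset_union_right
          (single_commutator_mem_span_isNilpotent i a b)
    rw [hA] at hle
    exact hle Submodule.mem_top
  refine Submodule.eq_top_iff'.2 fun M ↦ ?_
  rw [matrix_eq_sum_single M]
  refine Submodule.sum_mem _ fun i _ ↦ Submodule.sum_mem _ fun j _ ↦ ?_
  rcases eq_or_ne i j with rfl | h
  · exact hdiag i _
  · exact Submodule.span_mono Set.subset_union_right (single_mem_span_isNilpotent h _)

end Matrix

open Quaternion in
theorem Quaternion.span_one_union_commutators_eq_top {R : Type*} [CommRing R]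
    (h2 : IsUnit (2 : R)) :
    Submodule.span R ({1} ∪ {c : ℍ[R] | ∃ a b, a * b - b * a = c}) = ⊤ := by
  set S := Submodule.span R ({1} ∪ {c : ℍ[R] | ∃ a b, a * b - b * a = c})
  have one_mem : (1 : ℍ[R]) ∈ S := Submodule.subset_span (.inl rfl)
  have commutator_mem (a b : ℍ[R]) : a * b - b * a ∈ S :=
    Submodule.subset_span (.inr ⟨a, b, rfl⟩)
  let i : ℍ[R] := ⟨0, 1, 0, 0⟩
  let j : ℍ[R] := ⟨0, 0, 1, 0⟩
  let k : ℍ[R] := ⟨0, 0, 0, 1⟩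
  refine Submodule.eq_top_iff'.2 fun q ↦ ?_
  have hq : (2 : R) • q = (2 * q.re) • 1 + q.imI • (j * k - k * j) + q.imJ • (k * i - i * k)
      + q.imK • (i * j - j * i) := by
    ext <;> simp [re_mul, imI_mul, imJ_mul, imK_mul] <;> simp [i, j, k] <;> ring
  rw [← S.smul_mem_iff_of_isUnit h2, hq]
  exact add_mem (add_mem (add_mem (S.smul_mem _ one_mem) (S.smul_mem _ (commutator_mem _ _)))
    (S.smul_mem _ (commutator_mem _ _))) (S.smul_mem _ (commutator_mem _ _))

/-- For `n ≥ 2`, `M_n(ℍ)` is spanned as a real vector space by the identity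
matrix together with the nilpotent matrices. -/
theorem matrix_quaternion_spanned_by_one_and_nilpotents
    {n : ℕ} (hn : 2 ≤ n) :
    Submodule.span ℝ
      ({(1 : Matrix (Fin n) (Fin n) (Quaternion ℝ))} ∪
        {N : Matrix (Fin n) (Fin n) (Quaternion ℝ) | IsNilpotent N}) = ⊤ := by
  have : Nontrivial (Fin n) := Fin.nontrivial_iff_two_le.mpr hn
  refine Matrix.span_one_union_isNilpotent_eq_top ?_
    (Quaternion.span_one_union_commutators_eq_top ?_)
  · rw [Fintype.card_fin, isUnit_iff_ne_zero, Nat.cast_ne_zero]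
    omega
  · exact isUnit_iff_ne_zero.2 two_ne_zero
end

section
/- Let F be an algebraically closed field and n ≥ 1. If S ⊆ M_n(F) is an irreducible multiplicative semigroup, then the F-algebra generated by S equals M_n(F) (Burnside's theorem). -/
/-!
Let `A` be the algebra generated by `S`, acting on `V = F^n`. Irreducibility of `S` makes `V` a
simple `A`-module, so by Schur's lemma over the algebraically closed field `F` every
`A`-endomorphism of `V` is a scalar. Hence every `F`-linear map of `V` commutes with
`End_A V`, and the Jacobson density theorem realises it as an element of `A`.
-/

open Module

section

variable {F V : Type*} [Field F] [AddCommGroup V] [Module F V]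

namespace Subalgebra

theorem isSimpleModule_of_forall_invariant [Nontrivial V] (B : Subalgebra F (End F V))
    (hirr : ∀ W : Submodule F V, (∀ f ∈ B, ∀ v ∈ W, f v ∈ W) → W = ⊥ ∨ W = ⊤) :
    IsSimpleModule B V where
  eq_bot_or_eq_top N := by
    have := hirr (N.restrictScalars F) fun f hf v hv ↦ N.smul_mem ⟨f, hf⟩ hv
    rwa [Submodule.restrictScalars_eq_bot_iff, Submodule.restrictScalars_eq_top_iff] at this

theorem eq_top_of_isSimpleModule [IsAlgClosed F] [FiniteDimensional F V]
    (B : Subalgebra F (End F V)) [IsSimpleModule B V] : B = ⊤ := by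
  have schur := (IsSimpleModule.algebraMap_end_bijective_of_isAlgClosed F (A := B) (V := V)).2
  have : Module.Finite (End B V) V := .of_restrictScalars_finite F _ _
  refine eq_top_iff.2 fun g _ ↦ ?_
  let g' : End (End B V) V :=
    { toFun := g
      map_add' := g.map_add
      map_smul' := fun φ v ↦ by
        obtain ⟨c, rfl⟩ := schur φ
        exact g.map_smul c v }
  obtain ⟨b, hb⟩ := Module.Finite.toModuleEnd_moduleEnd_surjective g'
  have hbg : (b : End F V) = g := LinearMap.ext fun v ↦ congr($hb v)
  exact hbg ▸ b.2

end Subalgebra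

theorem Algebra.adjoin_eq_top_of_irreducible [IsAlgClosed F] [FiniteDimensional F V]
    [Nontrivial V] (T : Set (End F V))
    (hirr : ∀ W : Submodule F V, (∀ f ∈ T, ∀ v ∈ W, f v ∈ W) → W = ⊥ ∨ W = ⊤) :
    Algebra.adjoin F T = ⊤ :=
  have := (Algebra.adjoin F T).isSimpleModule_of_forall_invariant fun W hW ↦
    hirr W fun f hf ↦ hW f (Algebra.subset_adjoin hf)
  Subalgebra.eq_top_of_isSimpleModule _

end

theorem burnside_algebraically_closed_general
    {F : Type} [Field F] [IsAlgClosed F] {n : ℕ} (hn : 1 ≤ n)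
    (S : Set (Matrix (Fin n) (Fin n) F))
    (hirr : ∀ W : Submodule F (Fin n → F),
      (∀ A ∈ S, ∀ v ∈ W, A.mulVec v ∈ W) → W = ⊥ ∨ W = ⊤) :
    Algebra.adjoin F S = ⊤ := by
  have : NeZero n := ⟨by omega⟩
  let e : Matrix (Fin n) (Fin n) F ≃ₐ[F] End F (Fin n → F) := Matrix.toLinAlgEquiv'
  have hmap : (Algebra.adjoin F S).map e.toAlgHom = ⊤ := by
    rw [AlgHom.map_adjoin]
    exact Algebra.adjoin_eq_top_of_irreducible _ fun W hW ↦
      hirr W fun A hA ↦ hW _ ⟨A, hA, rfl⟩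
  refine Subalgebra.map_injective (f := e.toAlgHom) e.injective ?_
  rw [hmap, Algebra.map_top, eq_comm, AlgHom.range_eq_top]
  exact e.surjective

/-- Burnside's theorem: over an algebraically closed field, an irreducible
semigroup of matrices generates the full matrix algebra. -/
theorem burnside_algebraically_closed
    {F : Type} [Field F] [IsAlgClosed F] {n : ℕ} (hn : 1 ≤ n)
    (S : Set (Matrix (Fin n) (Fin n) F))
    (hsemi : ∀ A ∈ S, ∀ B ∈ S, A * B ∈ S)
    (hirr : ∀ W : Submodule F (Fin n → F),
      (∀ A ∈ S, ∀ v ∈ W, A.mulVec v ∈ W) → W = ⊥ ∨ W = ⊤) :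
    Algebra.adjoin F S = ⊤ :=
  burnside_algebraically_closed_general hn S hirr
end
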